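/- For every n ≥ 2 there is a constant C depending only on n with the following property. Let r₁, …, r_m ≥ 1 be radii, let V > 0 satisfy Σ_{i=1}^m r_i^{n-1} ≤ V, and set R = C·V^{1/(n-1)}. Then there exist points p₁, …, p_m ∈ ℝⁿ such that the closed balls B(p_i, 2r_i) are pairwise disjoint, none of them contains the origin, each is contained in the closed ball of radius R centered at the origin, and their radial projections { R·x/‖x‖ : x ∈ B(p_i, 2r_i) } onto the sphere of radius R are pairwise disjoint. -/

import Mathlib

/-!
Pack the balls in a hyperplane first: placing them greedily in order of decreasing radius, a
volume comparison always leaves room for the next centre in a ball of radius `17 V^{1/(n-1)}`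
of `ℝ^{n-1}`, keeping centres `8 (rᵢ + rⱼ)` apart. Then lift the hyperplane to height
`L = 17 V^{1/(n-1)}`. Two lifted balls are separated by the hyperplane through the origin that
contains the perpendicular bisector of their centres inside the lifted hyperplane; since the
centres stay within `L` of the axis, that hyperplane is not too steep, and both balls lie
strictly on opposite sides of it, hence so do their radial projections.
-/

open Metric Set
open scoped ENNReal NNReal

noncomputable section

abbrev Euc (n : ℕ) := EuclideanSpace ℝ (Fin n)

open Module MeasureTheory

section Packing

variable {E : Type*} [NormedAddCommGroup E] [NormedSpace ℝ E] [FiniteDimensional ℝ E]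

theorem exists_mem_ball_forall_lt_dist {ι : Type*} (t : Finset ι) (c : ι → E) {ρ : ι → ℝ}
    (hρ : ∀ i ∈ t, 0 ≤ ρ i) {L : ℝ} (hL : 0 < L)
    (hsum : ∑ i ∈ t, ρ i ^ finrank ℝ E < L ^ finrank ℝ E) :
    ∃ x ∈ ball (0 : E) L, ∀ i ∈ t, ρ i < dist x (c i) := by
  let _ : MeasurableSpace E := borel E
  have : BorelSpace E := ⟨rfl⟩
  set μ : Measure E := Measure.addHaar
  by_contra! hcover
  have hsub : ball (0 : E) L ⊆ ⋃ i ∈ t, closedBall (c i) (ρ i) := fun x hx => by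
    simpa using hcover x hx
  have hunit₀ : μ (ball 0 1) ≠ 0 := (measure_ball_pos μ _ one_pos).ne'
  have hunit : μ (ball 0 1) ≠ ∞ := measure_ball_lt_top.ne
  have := calc
    ENNReal.ofReal (L ^ finrank ℝ E) * μ (ball 0 1) = μ (ball 0 L) := by
      rw [Measure.addHaar_ball_of_pos μ 0 hL]
    _ ≤ ∑ i ∈ t, μ (closedBall (c i) (ρ i)) :=
      (measure_mono hsub).trans (measure_biUnion_finset_le _ _)
    _ = ENNReal.ofReal (∑ i ∈ t, ρ i ^ finrank ℝ E) * μ (ball 0 1) := by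
      rw [ENNReal.ofReal_sum_of_nonneg fun i hi => pow_nonneg (hρ i hi) _, Finset.sum_mul]
      exact Finset.sum_congr rfl fun i hi => Measure.addHaar_closedBall μ _ (hρ i hi)
    _ < ENNReal.ofReal (L ^ finrank ℝ E) * μ (ball 0 1) :=
      ENNReal.mul_lt_mul_left hunit₀ hunit ((ENNReal.ofReal_lt_ofReal_iff (by positivity)).2 hsum)
  exact this.false

/-- Insert the balls in order of decreasing radius: as the balls already placed are at least as
large as the new one, a centre outside their `2s`-fold enlargements is far enough from all. -/
theorem exists_separated_centers [Nontrivial E] {ι : Type*} (t : Finset ι) {r : ι → ℝ}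
    (hr : ∀ i, 0 ≤ r i) {s V : ℝ} (hs : 0 ≤ s) (hV : 0 < V)
    (hsum : ∑ i ∈ t, r i ^ finrank ℝ E ≤ V) :
    ∃ q : ι → E, (∀ i ∈ t, ‖q i‖ ≤ (2 * s + 1) * V ^ ((finrank ℝ E : ℝ)⁻¹)) ∧
      (t : Set ι).Pairwise fun i j => s * (r i + r j) < dist (q i) (q j) := by
  classical
  set d := finrank ℝ E
  have hd : d ≠ 0 := finrank_pos.ne'
  set L := (2 * s + 1) * V ^ ((d : ℝ)⁻¹)
  have hL : 0 < L := by positivity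
  have hLd : L ^ d = (2 * s + 1) ^ d * V := by
    rw [mul_pow, Real.rpow_inv_natCast_pow hV.le hd]
  induction t using Finset.induction_on_min_value r with
  | empty => exact ⟨0, by simp, by simp⟩
  | insert a t hat hmin ih =>
    rw [Finset.sum_insert hat] at hsum
    have hsum_t : ∑ i ∈ t, r i ^ d ≤ V := by linarith [pow_nonneg (hr a) d]
    obtain ⟨q, hqL, hq⟩ := ih hsum_t
    obtain ⟨x, hxL, hx⟩ := exists_mem_ball_forall_lt_dist t q (ρ := fun i => 2 * s * r i)
      (fun i _ => by have := hr i; positivity) hL <| calc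
        ∑ i ∈ t, (2 * s * r i) ^ d = (2 * s) ^ d * ∑ i ∈ t, r i ^ d := by
          simp only [mul_pow, Finset.mul_sum]
        _ ≤ (2 * s) ^ d * V := by gcongr
        _ < L ^ d := by
          rw [hLd]
          gcongr
          linarith
    refine ⟨Function.update q a x, ?_, ?_⟩
    · intro i hi
      rcases eq_or_ne i a with rfl | hia
      · simpa using (mem_ball_zero_iff.1 hxL).le
      · simpa [hia] using hqL i ((Finset.mem_insert.1 hi).resolve_left hia)
    · have hfar : ∀ b ∈ t, s * (r a + r b) < dist x (q b) := fun b hb =>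
        lt_of_le_of_lt (by nlinarith [hmin b hb]) (hx b hb)
      rw [Finset.coe_insert]
      refine Set.Pairwise.insert_of_notMem hat ?_ fun b hb => ?_
      · refine hq.imp_on fun i hi j hj _ h => ?_
        have hia : i ≠ a := fun h => hat (h ▸ hi)
        have hja : j ≠ a := fun h => hat (h ▸ hj)
        simpa only [Function.update_of_ne hia, Function.update_of_ne hja] using h
      · have hba : b ≠ a := fun h => hat (h ▸ hb)
        simp only [Function.update_self, Function.update_of_ne hba]
        exact ⟨hfar b hb, by rw [dist_comm, add_comm]; exact hfar b hb⟩

end Packing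

section RadialShadow

open scoped RealInnerProductSpace

variable {E : Type*} [NormedAddCommGroup E] [InnerProductSpace ℝ E]

theorem inner_smul_div_norm_pos {w x : E} (hx : 0 < ⟪w, x⟫) {R : ℝ} (hR : 0 < R) :
    0 < ⟪w, (R / ‖x‖) • x⟫ := by
  have hx0 : x ≠ 0 := by rintro rfl; simp at hx
  rw [real_inner_smul_right]
  exact mul_pos (div_pos hR (norm_pos_iff.2 hx0)) hx

theorem disjoint_image_smul_div_norm {S T : Set E} (w : E) (hS : ∀ x ∈ S, 0 < ⟪w, x⟫)
    (hT : ∀ x ∈ T, ⟪w, x⟫ < 0) {R : ℝ} (hR : 0 < R) :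
    Disjoint ((fun x : E => (R / ‖x‖) • x) '' S) ((fun x : E => (R / ‖x‖) • x) '' T) := by
  rw [Set.disjoint_left]
  rintro _ ⟨x, hx, rfl⟩ ⟨y, hy, hxy : (R / ‖y‖) • y = (R / ‖x‖) • x⟩
  have hpos := inner_smul_div_norm_pos (hS x hx) hR
  have hneg := inner_smul_div_norm_pos (w := -w) (x := y) (by simpa using hT y hy) hR
  rw [hxy, inner_neg_left] at hneg
  linarith

theorem inner_pos_of_mem_closedBall {w p x : E} {ρ : ℝ} (h : ρ * ‖w‖ < ⟪w, p⟫)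
    (hx : x ∈ closedBall p ρ) : 0 < ⟪w, x⟫ := by
  rw [mem_closedBall, dist_eq_norm] at hx
  calc 0 < ⟪w, p⟫ - ρ * ‖w‖ := sub_pos.2 h
    _ ≤ ⟪w, p⟫ - ‖w‖ * ‖x - p‖ := by rw [mul_comm]; gcongr
    _ ≤ ⟪w, p⟫ + ⟪w, x - p⟫ := by linarith [neg_le_of_abs_le (abs_real_inner_le_norm w (x - p))]
    _ = ⟪w, x⟫ := by rw [inner_sub_right]; ring

/-- The separating hyperplane through the origin meets `L • e + eᗮ` in the perpendicular bisector
of the two centres; as these lie within `L` of `L • e`, its normal `w` has `‖w‖ ≤ 2 ‖q - q'‖`. -/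
theorem disjoint_image_smul_div_norm_closedBall {e q q' : E} {L ρ ρ' R : ℝ} (he : ‖e‖ = 1)
    (hq : ⟪e, q⟫ = 0) (hq' : ⟪e, q'⟫ = 0) (hL : 0 < L) (hqL : ‖q‖ ≤ L) (hq'L : ‖q'‖ ≤ L)
    (hρ : 4 * ρ < dist q q') (hρ' : 4 * ρ' < dist q q') (hR : 0 < R) :
    Disjoint ((fun x : E => (R / ‖x‖) • x) '' closedBall (L • e + q) ρ)
      ((fun x : E => (R / ‖x‖) • x) '' closedBall (L • e + q') ρ') := by
  set t := dist q q' with ht_def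
  set c := (‖q‖ ^ 2 - ‖q'‖ ^ 2) / 2 with hc_def
  set w := (q - q') - (c / L) • e
  have hw_lift : ∀ y, ⟪e, y⟫ = 0 → ⟪w, L • e + y⟫ = ⟪q - q', y⟫ - c := fun y hy => by
    have hee : ⟪e, e⟫ = 1 := by rw [real_inner_self_eq_norm_sq, he, one_pow]
    simp only [w, inner_sub_left, inner_add_right, inner_smul_left, inner_smul_right,
      real_inner_comm e q, real_inner_comm e q', hq, hq', hy, hee, RCLike.conj_to_real]
    field_simp
    ring
  have ht : t ^ 2 = ‖q‖ ^ 2 - 2 * ⟪q, q'⟫ + ‖q'‖ ^ 2 := by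
    rw [ht_def, dist_eq_norm, norm_sub_sq_real]
  have hwq : ⟪w, L • e + q⟫ = t ^ 2 / 2 := by
    rw [hw_lift q hq, inner_sub_left, real_inner_self_eq_norm_sq, real_inner_comm, ht, hc_def]
    ring
  have hwq' : ⟪w, L • e + q'⟫ = -(t ^ 2 / 2) := by
    rw [hw_lift q' hq', inner_sub_left, real_inner_self_eq_norm_sq, ht, hc_def]
    ring
  have hc : |c| ≤ t * L := by
    have h1 : |‖q‖ - ‖q'‖| ≤ t := by rw [ht_def, dist_eq_norm]; exact abs_norm_sub_norm_le q q'
    calc |c| = |‖q‖ - ‖q'‖| * (‖q‖ + ‖q'‖) / 2 := by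
          rw [abs_div, abs_two, sq_sub_sq, abs_mul, abs_of_nonneg (by positivity : 0 ≤ ‖q‖ + ‖q'‖)]
          ring
      _ ≤ t * (L + L) / 2 := by gcongr
      _ = t * L := by ring
  have hw : ‖w‖ ≤ 2 * t := calc
    ‖w‖ ≤ t + |c| / L := by
      refine (norm_sub_le _ _).trans ?_
      rw [norm_smul, he, mul_one, Real.norm_eq_abs, abs_div, abs_of_pos hL, ← dist_eq_norm]
    _ ≤ 2 * t := by linarith [(div_le_iff₀ hL).2 hc]
  refine disjoint_image_smul_div_norm w (fun x hx => ?_) (fun x hx => ?_) hR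
  · have hρ0 : 0 ≤ ρ := dist_nonneg.trans hx
    refine inner_pos_of_mem_closedBall ?_ hx
    rw [hwq]
    nlinarith [norm_nonneg w]
  · have hρ0 : 0 ≤ ρ' := dist_nonneg.trans hx
    have := inner_pos_of_mem_closedBall (w := -w) ?_ hx
    · simpa using this
    rw [inner_neg_left, hwq', norm_neg]
    nlinarith [norm_nonneg w]

theorem le_norm_smul_add_of_inner_eq_zero {e q : E} (he : ‖e‖ = 1) (hq : ⟪e, q⟫ = 0) (L : ℝ) :
    L ≤ ‖L • e + q‖ :=
  calc L = ⟪e, L • e + q⟫ := by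
        rw [inner_add_right, real_inner_smul_right, real_inner_self_eq_norm_sq, he, hq]; ring
    _ ≤ ‖e‖ * ‖L • e + q‖ := real_inner_le_norm _ _
    _ = ‖L • e + q‖ := by rw [he, one_mul]

theorem exists_norm_eq_one_finrank_orthogonal [FiniteDimensional ℝ E] {k : ℕ}
    (hE : finrank ℝ E = k + 1) : ∃ e : E, ‖e‖ = 1 ∧ finrank ℝ (ℝ ∙ e)ᗮ = k := by
  have : Nontrivial E := finrank_pos_iff (R := ℝ) |>.1 (by omega)
  have : Fact (finrank ℝ E = k + 1) := ⟨hE⟩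
  obtain ⟨e, he⟩ := exists_norm_eq E zero_le_one
  exact ⟨e, he, Submodule.finrank_orthogonal_span_singleton (norm_ne_zero_iff.1 (by simp [he]))⟩

theorem exists_packing_disjoint_radial_shadows [FiniteDimensional ℝ E] {k : ℕ} (hk : 1 ≤ k)
    (hE : finrank ℝ E = k + 1) {ι : Type*} [Fintype ι] {r : ι → ℝ} (hr : ∀ i, 0 ≤ r i)
    {V : ℝ} (hV : 0 < V) (hsum : ∑ i, r i ^ k ≤ V) {R : ℝ} (hR : 36 * V ^ ((k : ℝ)⁻¹) ≤ R) :
    ∃ p : ι → E,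
      Pairwise (fun i j => Disjoint (closedBall (p i) (2 * r i)) (closedBall (p j) (2 * r j))) ∧
      (∀ i, (0 : E) ∉ closedBall (p i) (2 * r i)) ∧
      (∀ i, closedBall (p i) (2 * r i) ⊆ closedBall (0 : E) R) ∧
      Pairwise (fun i j => Disjoint
        ((fun x : E => (R / ‖x‖) • x) '' closedBall (p i) (2 * r i))
        ((fun x : E => (R / ‖x‖) • x) '' closedBall (p j) (2 * r j))) := by
  obtain ⟨e, he, hK⟩ := exists_norm_eq_one_finrank_orthogonal hE
  have : Nontrivial (ℝ ∙ e)ᗮ := finrank_pos_iff (R := ℝ) |>.1 (by omega)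
  set T := V ^ ((k : ℝ)⁻¹)
  have hT : 0 < T := by positivity
  have hrT : ∀ i, r i ≤ T := fun i => by
    rw [Real.le_rpow_inv_iff_of_pos (hr i) hV.le (by positivity), Real.rpow_natCast]
    exact (Finset.single_le_sum (fun j _ => pow_nonneg (hr j) k) (Finset.mem_univ i)).trans hsum
  obtain ⟨q, hqL, hq⟩ := exists_separated_centers (E := (ℝ ∙ e)ᗮ) Finset.univ hr (s := 8)
    (by norm_num) hV (by rwa [hK])
  replace hqL : ∀ i, ‖(q i : E)‖ ≤ 17 * T := fun i =>
    (hqL i (Finset.mem_univ i)).trans_eq (by rw [hK]; norm_num [T])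
  have horth : ∀ i, ⟪e, (q i : E)⟫ = 0 := fun i =>
    Submodule.mem_orthogonal_singleton_iff_inner_right.1 (q i).2
  have hsep : ∀ i j, i ≠ j → 8 * (r i + r j) < dist (q i : E) (q j) := fun i j hij =>
    hq (Finset.mem_coe.2 (Finset.mem_univ i)) (Finset.mem_coe.2 (Finset.mem_univ j)) hij
  refine ⟨fun i => (17 * T) • e + q i, fun i j hij => ?_, fun i => ?_, fun i => ?_,
    fun i j hij => ?_⟩
  · apply closedBall_disjoint_closedBall
    rw [dist_add_left]
    linarith [hsep i j hij, hr i, hr j]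
  · rw [mem_closedBall, dist_zero_left, not_le]
    linarith [le_norm_smul_add_of_inner_eq_zero he (horth i) (17 * T), hrT i]
  · refine closedBall_subset_closedBall' ?_
    rw [dist_zero_right]
    calc 2 * r i + ‖(17 * T) • e + q i‖ ≤ 2 * T + (17 * T + 17 * T) := by
          gcongr
          · exact hrT i
          · refine (norm_add_le _ _).trans (add_le_add ?_ ?_)
            · rw [norm_smul, he, mul_one, Real.norm_of_nonneg (by positivity)]
            · exact hqL i
      _ ≤ R := by linarith
  · have hsep_ij := hsep i j hij
    exact disjoint_image_smul_div_norm_closedBall he (horth i) (horth j) (by positivity)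
      (hqL i) (hqL j) (by linarith [hr j]) (by linarith [hr i]) (by linarith)

end RadialShadow

/-- Packing balls with disjoint radial shadows.
For every `n ≥ 2` there is a constant `C` depending only on `n` with the following property.
Given radii `r₁, …, r_m ≥ 1` and `V > 0` with `Σ rᵢ^{n-1} ≤ V`, and setting
`R = C·V^{1/(n-1)}`, there are points `p₁, …, p_m ∈ ℝⁿ` such that the closed balls
`B(pᵢ, 2rᵢ)` are pairwise disjoint, avoid the origin, lie in the closed ball of radius `R`
centered at the origin, and have pairwise disjoint radial projections
`{R·x/‖x‖ : x ∈ B(pᵢ, 2rᵢ)}` onto the sphere of radius `R`. -/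
theorem statement13 (n : ℕ) (hn : 2 ≤ n) :
    ∃ C : ℝ, 0 < C ∧
      ∀ (m : ℕ) (r : Fin m → ℝ), (∀ i, 1 ≤ r i) →
        ∀ V : ℝ, 0 < V → (∑ i, r i ^ (n - 1)) ≤ V →
          ∀ R : ℝ, R = C * V ^ (((n : ℝ) - 1)⁻¹) →
            ∃ p : Fin m → Euc n,
              (∀ i j, i ≠ j →
                Disjoint (closedBall (p i) (2 * r i)) (closedBall (p j) (2 * r j))) ∧
              (∀ i, (0 : Euc n) ∉ closedBall (p i) (2 * r i)) ∧
              (∀ i, closedBall (p i) (2 * r i) ⊆ closedBall (0 : Euc n) R) ∧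
              (∀ i j, i ≠ j →
                Disjoint
                  ((fun x : Euc n => (R / ‖x‖) • x) '' closedBall (p i) (2 * r i))
                  ((fun x : Euc n => (R / ‖x‖) • x) '' closedBall (p j) (2 * r j))) := by
  refine ⟨36, by norm_num, fun m r hr V hV hsum R hR => ?_⟩
  have hexp : ((n - 1 : ℕ) : ℝ)⁻¹ = ((n : ℝ) - 1)⁻¹ := by
    rw [Nat.cast_sub (by omega), Nat.cast_one]
  exact exists_packing_disjoint_radial_shadows (by omega)
    (by rw [finrank_euclideanSpace_fin]; omega)
    (fun i => zero_le_one.trans (hr i)) hV hsum (by rw [hR, hexp])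

end
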